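/- arXiv:2201.10151 — 2 statements merged into one kernel-verified Lean document; each statement's English description precedes it below -/
import Mathlib

section
/- For every nonzero finite nonnegative measure μ on D, the exponential convergence parameter satisfies θ_S(μ) ≥ sup{θ ≥ 0 : μ{x ∈ D : θ_S(x) ≥ θ} > 0}. -/
open MeasureTheory ProbabilityTheory Filter ENNReal

variable {α : Type*} [MeasurableSpace α]

/-- `μ S_n 𝟙_D`: the mass of the measure `μ` pushed through `n` steps of the
sub-Markovian semigroup `S`. -/
noncomputable def kmass (S : ℕ → Kernel α α) (n : ℕ) (μ : Measure α) : ℝ≥0∞ :=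
  Measure.bind μ (fun x => S n x) Set.univ

/-- Exponential convergence parameter `θ_S(μ)`. -/
noncomputable def expParam (S : ℕ → Kernel α α) (μ : Measure α) : ℝ≥0∞ :=
  sInf {θ : ℝ≥0∞ | Filter.liminf (fun n : ℕ => θ⁻¹ ^ n * kmass S n μ) Filter.atTop = 0}

/-- `θ_{0,S} = sup_{x ∈ D} θ_S(δ_x)`. -/
noncomputable def theta0 (S : ℕ → Kernel α α) : ℝ≥0∞ :=
  ⨆ x : α, expParam S (Measure.dirac x)

/-- Polynomial convergence parameter `j_S(μ)` (with the convention `inf ∅ = 0`). -/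
noncomputable def polyParam (S : ℕ → Kernel α α) (μ : Measure α) : ℝ :=
  sInf {l : ℝ | 0 ≤ l ∧
    Filter.liminf (fun n : ℕ => (n : ℝ≥0∞) ^ (-l) * (theta0 S)⁻¹ ^ n * kmass S n μ)
      Filter.atTop = 0}

/-- `j_S(x) := j_S(δ_x)`. -/
noncomputable def jfun (S : ℕ → Kernel α α) (x : α) : ℝ :=
  polyParam S (Measure.dirac x)

/-- `(S_n)` is a sub-Markovian semigroup. -/
def IsSubMarkovSemigroup (S : ℕ → Kernel α α) : Prop :=
  S 0 = Kernel.id ∧ (∀ n m, S (n + m) = (S m) ∘ₖ (S n)) ∧ ∀ n x, (S n) x Set.univ ≤ 1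

/-! If `θ'⁻¹ⁿ μSₙ(𝟙)` has liminf zero, Fatou's lemma applied to `x ↦ θ'⁻¹ⁿ Sₙ𝟙(x)` shows that
`θ'⁻¹ⁿ Sₙ𝟙(x)` has liminf zero for `μ`-a.e. `x`, i.e. `θ_S(x) ≤ θ'` almost everywhere. Hence any `θ`
with `μ {θ ≤ θ_S(x)} > 0` satisfies `θ ≤ θ'`. -/

lemma kmass_eq_lintegral (S : ℕ → Kernel α α) (n : ℕ) (μ : Measure α) :
    kmass S n μ = ∫⁻ x, S n x Set.univ ∂μ :=
  Measure.bind_apply MeasurableSet.univ (S n).measurable.aemeasurable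

lemma kmass_dirac (S : ℕ → Kernel α α) (n : ℕ) (x : α) :
    kmass S n (Measure.dirac x) = S n x Set.univ := by
  rw [kmass, Measure.dirac_bind (S n).measurable]

lemma ae_expParam_dirac_le {S : ℕ → Kernel α α} {μ : Measure α} {θ : ℝ≥0∞}
    (hθ : liminf (fun n : ℕ => θ⁻¹ ^ n * kmass S n μ) atTop = 0) :
    ∀ᵐ x ∂μ, expParam S (Measure.dirac x) ≤ θ := by
  have hmeas (n : ℕ) : Measurable fun x => θ⁻¹ ^ n * S n x Set.univ :=
    (Kernel.measurable_coe _ MeasurableSet.univ).const_mul _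
  have hfatou : ∫⁻ x, liminf (fun n : ℕ => θ⁻¹ ^ n * S n x Set.univ) atTop ∂μ = 0 := by
    refine le_antisymm ?_ zero_le
    calc ∫⁻ x, liminf (fun n : ℕ => θ⁻¹ ^ n * S n x Set.univ) atTop ∂μ
        ≤ liminf (fun n : ℕ => ∫⁻ x, θ⁻¹ ^ n * S n x Set.univ ∂μ) atTop :=
          lintegral_liminf_le hmeas
      _ = 0 := by
          simpa only [lintegral_const_mul _ (Kernel.measurable_coe _ MeasurableSet.univ),
            ← kmass_eq_lintegral] using hθ
  filter_upwards [(lintegral_eq_zero_iff (Measurable.liminf hmeas)).mp hfatou] with x hx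
  exact sInf_le (by simpa only [Set.mem_ofPred_eq, kmass_dirac, Pi.zero_apply] using hx)

theorem expParam_ge_sSup_general (S : ℕ → Kernel α α)
    (μ : Measure α) :
    sSup {θ : ℝ≥0∞ | 0 < μ {x | θ ≤ expParam S (Measure.dirac x)}} ≤ expParam S μ := by
  refine sSup_le fun θ hθ => le_sInf fun θ' hθ' => ?_
  by_contra! hlt
  have hnull : μ {x | θ ≤ expParam S (Measure.dirac x)} = 0 :=
    measure_mono_null (fun x (hx : θ ≤ _) (hle : _ ≤ θ') => (hx.trans hle).not_gt hlt)
      (ae_expParam_dirac_le hθ')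
  exact hθ.ne' hnull

/-- For every nonzero finite nonnegative measure `μ` on `D`, the exponential
convergence parameter satisfies `θ_S(μ) ≥ sup {θ ≥ 0 : μ {x : θ_S(x) ≥ θ} > 0}`. -/
theorem expParam_ge_sSup (S : ℕ → Kernel α α) (hS : IsSubMarkovSemigroup S)
    (μ : Measure α) [IsFiniteMeasure μ] (hμ : μ ≠ 0) :
    sSup {θ : ℝ≥0∞ | 0 < μ {x | θ ≤ expParam S (Measure.dirac x)}} ≤ expParam S μ :=
  expParam_ge_sSup_general S μ
end

section
/- Under Assumption (A), if ν ∈ M₊(W_S) is a quasi-stationary distribution such that ν(η_S) > 0 and ν{x : j_S(x) ≤ ℓ} = 1 for some ℓ ≥ 0, then the absorption parameter of ν equals θ_{0,S}. -/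
/-! By the semigroup property, a quasi-stationary `ν` has `ℙ_ν(n < τ_∂) = θⁿ` with `θ = ν S₁ 𝟙`.
Integrate the estimate of Assumption (A) for `f = 𝟙` against `ν`. Since `n ^ (-j_S) ≤ 1`,
`ν(η_S) ≤ (θ / θ₀)ⁿ + a_n ν(W)`; as `ν(η_S) > 0` and `a_n → 0`, this forces `θ₀ ≤ θ`. Since `j_S ≤ L`
`ν`-a.s., `θⁿ ≤ K n^L θ₀ⁿ`, which forces `θ ≤ θ₀`. -/

open MeasureTheory ProbabilityTheory Filter ENNReal

variable {α : Type*} [MeasurableSpace α]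

/-- **Assumption (A)** of Champagnat–Villemonais, for the sub-Markovian semigroup `S`,
with weight function `W`, probability measures `ν i`, functions `η i` (`i` in the finite or
countable index set `I`) and rate sequence `a`. -/
structure AssumptionA (S : ℕ → Kernel α α) {I : Type} (W : α → ℝ)
    (ν : I → Measure α) (η : I → α → ℝ) (a : ℕ → ℝ) : Prop where
  countable : Countable I
  theta0_pos : 0 < theta0 S
  theta0_le_one : theta0 S ≤ 1
  j_nat : ∀ x : α, ∃ k : ℕ, jfun S x = (k : ℝ)
  W_meas : Measurable W
  one_le_W : ∀ x, 1 ≤ W x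
  nu_prob : ∀ i, IsProbabilityMeasure (ν i)
  nu_W : ∀ i, ∫⁻ x, ENNReal.ofReal (W x) ∂(ν i) ≠ ∞
  eta_meas : ∀ i, Measurable (η i)
  eta_nonneg : ∀ i x, 0 ≤ η i x
  eta_ne_zero : ∀ i, η i ≠ 0
  eta_bdd : ∀ i, ∃ C : ℝ, ∀ x, η i x ≤ C * W x
  summable_etanu : ∀ x, Summable (fun i => η i x * (∫⁻ y, ENNReal.ofReal (W y) ∂(ν i)).toReal)
  etanu_bdd : ∃ C : ℝ, ∀ x,
    (∑' i, η i x * (∫⁻ y, ENNReal.ofReal (W y) ∂(ν i)).toReal) ≤ C * W x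
  SW_fin : ∀ n x, ∫⁻ y, ENNReal.ofReal (W y) ∂(S n x) ≠ ∞
  a_nonneg : ∀ n, 0 ≤ a n
  a_tendsto : Tendsto a atTop (nhds 0)
  approx : ∀ f : α → ℝ, Measurable f → ∀ c : ℝ, 0 ≤ c → (∀ x, |f x| ≤ c * W x) →
    ∀ n : ℕ, 1 ≤ n → ∀ x : α,
      |((theta0 S).toReal)⁻¹ ^ n * (n : ℝ) ^ (-(jfun S x)) * (∫ y, f y ∂(S n x)) -
        ∑' i, η i x * ∫ y, f y ∂(ν i)| ≤ a n * W x * c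

/-- `ν` is a quasi-stationary distribution for `S`. -/
def IsQSD (S : ℕ → Kernel α α) (ν : Measure α) : Prop :=
  IsProbabilityMeasure ν ∧ ∀ n, kmass S n ν ≠ 0 ∧
    Measure.bind ν (fun x => S n x) = kmass S n ν • ν

lemma kmass_smul (S : ℕ → Kernel α α) (n : ℕ) (c : ℝ≥0∞) (μ : Measure α) :
    kmass S n (c • μ) = c * kmass S n μ := by
  rw [kmass_eq_lintegral, kmass_eq_lintegral, lintegral_smul_measure, smul_eq_mul]

lemma jfun_nonneg (S : ℕ → Kernel α α) (x : α) : 0 ≤ jfun S x :=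
  Real.sInf_nonneg fun _ hl => hl.1

lemma le_of_eventually_pow_le_mul_pow {b t K : ℝ} (ht : 0 ≤ t) (L : ℕ)
    (h : ∀ᶠ n : ℕ in atTop, b ^ n ≤ K * (n : ℝ) ^ L * t ^ n) : b ≤ t := by
  by_contra! htb
  have hb : 0 < b := ht.trans_lt htb
  have hr : |t / b| < 1 := by
    rw [abs_of_nonneg (by positivity)]
    exact (div_lt_one hb).2 htb
  have hlim : Tendsto (fun n : ℕ => K * ((n : ℝ) ^ L * (t / b) ^ n)) atTop (nhds 0) := by
    simpa using (tendsto_pow_const_mul_const_pow_of_abs_lt_one L hr).const_mul K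
  have hge : ∀ᶠ n : ℕ in atTop, 1 ≤ K * ((n : ℝ) ^ L * (t / b) ^ n) := h.mono fun n hn => by
    rwa [div_pow, ← mul_div_assoc, ← mul_div_assoc, le_div_iff₀ (by positivity), one_mul,
      ← mul_assoc]
  exact absurd (ge_of_tendsto hlim hge) (by norm_num)

namespace IsSubMarkovSemigroup

variable {S : ℕ → Kernel α α}

lemma kmass_le_one (hS : IsSubMarkovSemigroup S) (n : ℕ) (μ : Measure α)
    [IsProbabilityMeasure μ] : kmass S n μ ≤ 1 := by
  rw [kmass_eq_lintegral]
  calc ∫⁻ x, S n x Set.univ ∂μ ≤ ∫⁻ _, 1 ∂μ := lintegral_mono fun x => hS.2.2 n x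
    _ = 1 := by simp

lemma kmass_zero (hS : IsSubMarkovSemigroup S) (μ : Measure α) [IsProbabilityMeasure μ] :
    kmass S 0 μ = 1 := by
  simp [kmass_eq_lintegral, hS.1]

lemma kmass_add (hS : IsSubMarkovSemigroup S) (n m : ℕ) (μ : Measure α) :
    kmass S (n + m) μ = kmass S m (μ.bind (S n)) := by
  rw [kmass, hS.2.1 n m, kmass]
  simp_rw [Kernel.comp_apply]
  rw [Measure.bind_bind (S n).measurable.aemeasurable (S m).measurable.aemeasurable]

lemma integral_toReal_mass (hS : IsSubMarkovSemigroup S) (n : ℕ) (μ : Measure α) :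
    ∫ x, (S n x Set.univ).toReal ∂μ = (kmass S n μ).toReal := by
  rw [kmass_eq_lintegral, integral_toReal ((S n).measurable_coe MeasurableSet.univ).aemeasurable
    (ae_of_all _ fun x => (hS.2.2 n x).trans_lt one_lt_top)]

lemma integrable_toReal_mass (hS : IsSubMarkovSemigroup S) (n : ℕ) (μ : Measure α)
    [IsFiniteMeasure μ] : Integrable (fun x => (S n x Set.univ).toReal) μ :=
  .of_bound ((S n).measurable_coe MeasurableSet.univ).ennreal_toReal.aestronglyMeasurable 1
    (ae_of_all _ fun x => by
      simpa using ENNReal.toReal_mono one_ne_top (hS.2.2 n x))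

end IsSubMarkovSemigroup

namespace IsQSD

variable {S : ℕ → Kernel α α} {ν : Measure α}

lemma kmass_add (hS : IsSubMarkovSemigroup S) (hq : IsQSD S ν) (n m : ℕ) :
    kmass S (n + m) ν = kmass S n ν * kmass S m ν := by
  rw [hS.kmass_add, (hq.2 n).2, kmass_smul]

lemma kmass_eq_pow (hS : IsSubMarkovSemigroup S) (hq : IsQSD S ν) (n : ℕ) :
    kmass S n ν = kmass S 1 ν ^ n := by
  have := hq.1
  induction n with
  | zero => rw [pow_zero, hS.kmass_zero ν]
  | succ n ih => rw [hq.kmass_add hS, ih, pow_succ]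

end IsQSD

namespace AssumptionA

variable {S : ℕ → Kernel α α} {I : Type} {W : α → ℝ} {ν : I → Measure α} {η : I → α → ℝ}
  {a : ℕ → ℝ}

lemma toReal_theta0_pos (hA : AssumptionA S W ν η a) : 0 < (theta0 S).toReal :=
  toReal_pos hA.theta0_pos.ne' (ne_top_of_le_ne_top one_ne_top hA.theta0_le_one)

lemma W_nonneg (hA : AssumptionA S W ν η a) (x : α) : 0 ≤ W x :=
  zero_le_one.trans (hA.one_le_W x)

lemma tsum_eta_nonneg (hA : AssumptionA S W ν η a) (x : α) : 0 ≤ ∑' i, η i x :=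
  tsum_nonneg fun i => hA.eta_nonneg i x

lemma integrable_W (hA : AssumptionA S W ν η a) {μ : Measure α}
    (hμW : ∫⁻ x, ENNReal.ofReal (W x) ∂μ ≠ ∞) : Integrable W μ :=
  ⟨hA.W_meas.aestronglyMeasurable,
    (hasFiniteIntegral_iff_ofReal (ae_of_all _ hA.W_nonneg)).2 hμW.lt_top⟩

lemma one_le_toReal_lintegral_W (hA : AssumptionA S W ν η a) (i : I) :
    1 ≤ (∫⁻ y, ENNReal.ofReal (W y) ∂(ν i)).toReal := by
  have := hA.nu_prob i
  have h : 1 ≤ ∫⁻ y, ENNReal.ofReal (W y) ∂(ν i) :=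
    calc 1 = ∫⁻ _, 1 ∂(ν i) := by simp
      _ ≤ ∫⁻ y, ENNReal.ofReal (W y) ∂(ν i) :=
        lintegral_mono fun y => ENNReal.one_le_ofReal.2 (hA.one_le_W y)
  simpa using ENNReal.toReal_mono (hA.nu_W i) h

lemma exists_tsum_eta_le (hA : AssumptionA S W ν η a) : ∃ C, ∀ x, ∑' i, η i x ≤ C * W x := by
  obtain ⟨C, hC⟩ := hA.etanu_bdd
  refine ⟨C, fun x => le_trans ?_ (hC x)⟩
  have hle : ∀ i, η i x ≤ η i x * (∫⁻ y, ENNReal.ofReal (W y) ∂(ν i)).toReal := fun i =>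
    le_mul_of_one_le_right (hA.eta_nonneg i x) (hA.one_le_toReal_lintegral_W i)
  exact Summable.tsum_le_tsum hle
    (.of_nonneg_of_le (fun i => hA.eta_nonneg i x) hle (hA.summable_etanu x))
    (hA.summable_etanu x)

lemma abs_mass_sub_tsum_eta_le (hA : AssumptionA S W ν η a) {n : ℕ} (hn : 1 ≤ n) (x : α) :
    |(theta0 S).toReal⁻¹ ^ n * (n : ℝ) ^ (-jfun S x) * (S n x Set.univ).toReal -
      ∑' i, η i x| ≤ a n * W x := by
  have h := hA.approx (fun _ => 1) measurable_const 1 zero_le_one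
    (fun y => by simpa using hA.one_le_W y) n hn x
  simpa [measureReal_def, (hA.nu_prob _).measure_univ] using h

lemma tsum_eta_le_toReal_mass (hA : AssumptionA S W ν η a) {n : ℕ} (hn : 1 ≤ n) (x : α) :
    ∑' i, η i x ≤ (theta0 S).toReal⁻¹ ^ n * (S n x Set.univ).toReal + a n * W x := by
  have hpoly : (n : ℝ) ^ (-jfun S x) ≤ 1 :=
    Real.rpow_le_one_of_one_le_of_nonpos (by exact_mod_cast hn) (neg_nonpos.2 (jfun_nonneg S x))
  have hdrop : (theta0 S).toReal⁻¹ ^ n * (n : ℝ) ^ (-jfun S x) * (S n x Set.univ).toReal ≤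
      (theta0 S).toReal⁻¹ ^ n * (S n x Set.univ).toReal :=
    mul_le_mul_of_nonneg_right (mul_le_of_le_one_right (by positivity) hpoly) toReal_nonneg
  linarith [(abs_le.1 (hA.abs_mass_sub_tsum_eta_le hn x)).1]

lemma toReal_mass_le_of_jfun_le (hA : AssumptionA S W ν η a) {n : ℕ} (hn : 1 ≤ n) {x : α} {L : ℕ}
    (hx : jfun S x ≤ L) :
    (S n x Set.univ).toReal ≤ (theta0 S).toReal ^ n * (n : ℝ) ^ L * (∑' i, η i x + a n * W x) := by
  set t0 := (theta0 S).toReal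
  set s := (S n x Set.univ).toReal
  have ht0 : 0 < t0 := hA.toReal_theta0_pos
  have hn1 : (1 : ℝ) ≤ n := by exact_mod_cast hn
  have hpoly : (n : ℝ) ^ jfun S x ≤ (n : ℝ) ^ L := by
    simpa using Real.rpow_le_rpow_of_exponent_le hn1 hx
  have hrhs : 0 ≤ ∑' i, η i x + a n * W x :=
    add_nonneg (hA.tsum_eta_nonneg x) (mul_nonneg (hA.a_nonneg n) (hA.W_nonneg x))
  calc s = t0 ^ n * (n : ℝ) ^ jfun S x * (t0⁻¹ ^ n * (n : ℝ) ^ (-jfun S x) * s) := by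
        rw [Real.rpow_neg (by positivity), inv_pow]
        field_simp
    _ ≤ t0 ^ n * (n : ℝ) ^ jfun S x * (∑' i, η i x + a n * W x) :=
        mul_le_mul_of_nonneg_left (by linarith [(abs_le.1 (hA.abs_mass_sub_tsum_eta_le hn x)).2])
          (by positivity)
    _ ≤ t0 ^ n * (n : ℝ) ^ L * (∑' i, η i x + a n * W x) := by gcongr

lemma toReal_theta0_le_of_isQSD (hA : AssumptionA S W ν η a) (hS : IsSubMarkovSemigroup S)
    {νq : Measure α} (hq : IsQSD S νq) (hνW : ∫⁻ x, ENNReal.ofReal (W x) ∂νq ≠ ∞)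
    (hη : 0 < ∫ x, ∑' i, η i x ∂νq) :
    (theta0 S).toReal ≤ (kmass S 1 νq).toReal := by
  have := hq.1
  set t0 := (theta0 S).toReal
  set t := (kmass S 1 νq).toReal
  set m := ∫ x, ∑' i, η i x ∂νq
  set IW := ∫ x, W x ∂νq
  have hW := hA.integrable_W hνW
  have hmass : ∀ n, 1 ≤ n → m ≤ t0⁻¹ ^ n * t ^ n + a n * IW := fun n hn =>
    calc m ≤ ∫ x, t0⁻¹ ^ n * (S n x Set.univ).toReal + a n * W x ∂νq :=
          integral_mono_of_nonneg (ae_of_all _ hA.tsum_eta_nonneg)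
            (((hS.integrable_toReal_mass n νq).const_mul _).add (hW.const_mul _))
            (ae_of_all _ fun x => hA.tsum_eta_le_toReal_mass hn x)
      _ = t0⁻¹ ^ n * t ^ n + a n * IW := by
          rw [integral_add ((hS.integrable_toReal_mass n νq).const_mul _) (hW.const_mul _),
            integral_const_mul, integral_const_mul, hS.integral_toReal_mass, hq.kmass_eq_pow hS,
            toReal_pow]
  have hsmall : ∀ᶠ n in atTop, a n * IW < m / 2 :=
    (hA.a_tendsto.mul_const IW).eventually (gt_mem_nhds (by rw [zero_mul]; positivity))
  refine le_of_eventually_pow_le_mul_pow toReal_nonneg 0 (K := 2 / m) ?_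
  filter_upwards [hsmall, eventually_ge_atTop 1] with n hsmall hn
  have hhalf : m / 2 ≤ t0⁻¹ ^ n * t ^ n := by linarith [hmass n hn]
  rw [inv_pow, ← div_eq_inv_mul, le_div_iff₀ (pow_pos hA.toReal_theta0_pos n)] at hhalf
  rw [pow_zero, mul_one, div_mul_eq_mul_div, le_div_iff₀ hη]
  linarith

lemma toReal_kmass_le_of_isQSD (hA : AssumptionA S W ν η a) (hS : IsSubMarkovSemigroup S)
    {νq : Measure α} (hq : IsQSD S νq) (hνW : ∫⁻ x, ENNReal.ofReal (W x) ∂νq ≠ ∞) (L : ℕ)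
    (hL : νq {x | jfun S x ≤ L} = 1) :
    (kmass S 1 νq).toReal ≤ (theta0 S).toReal := by
  have := hq.1
  set t0 := (theta0 S).toReal
  set t := (kmass S 1 νq).toReal
  set IW := ∫ x, W x ∂νq
  obtain ⟨C, hC⟩ := hA.exists_tsum_eta_le
  obtain ⟨B, hB⟩ := hA.a_tendsto.bddAbove_range
  refine le_of_eventually_pow_le_mul_pow toReal_nonneg L (K := (C + B) * IW) ?_
  filter_upwards [eventually_ge_atTop 1] with n hn
  have hbound : ∀ᵐ x ∂νq,
      (S n x Set.univ).toReal ≤ t0 ^ n * (n : ℝ) ^ L * ((C + B) * W x) := by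
    have hmeas : MeasurableSet
        {x | (S n x Set.univ).toReal ≤ t0 ^ n * (n : ℝ) ^ L * ((C + B) * W x)} :=
      measurableSet_le ((S n).measurable_coe MeasurableSet.univ).ennreal_toReal
        ((hA.W_meas.const_mul _).const_mul _)
    -- `{x | jfun S x ≤ L}` need not be measurable: compare it with the measurable set of good points.
    refine (ae_iff_measure_eq hmeas.nullMeasurableSet).2
      (le_antisymm (measure_mono (Set.subset_univ _)) ?_)
    rw [measure_univ, ← hL]
    refine measure_mono fun x hx => (hA.toReal_mass_le_of_jfun_le hn hx).trans ?_
    have hB' : a n * W x ≤ B * W x :=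
      mul_le_mul_of_nonneg_right (hB (Set.mem_range_self n)) (hA.W_nonneg x)
    gcongr
    linarith [hC x]
  calc t ^ n = ∫ x, (S n x Set.univ).toReal ∂νq := by
        rw [hS.integral_toReal_mass, hq.kmass_eq_pow hS, toReal_pow]
    _ ≤ ∫ x, t0 ^ n * (n : ℝ) ^ L * ((C + B) * W x) ∂νq :=
        integral_mono_ae (hS.integrable_toReal_mass n νq)
          (((hA.integrable_W hνW).const_mul _).const_mul _) hbound
    _ = (C + B) * IW * (n : ℝ) ^ L * t0 ^ n := by
        rw [integral_const_mul, integral_const_mul]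
        ring

end AssumptionA

/-- Under Assumption (A), if `ν ∈ M₊(W_S)` is a quasi-stationary distribution
with `ν(η_S) > 0` and `ν{x : j_S(x) ≤ ℓ} = 1` for some `ℓ ≥ 0`, then the absorption parameter
of `ν` equals `θ_{0,S}`, i.e. `ℙ_ν(n < τ_∂) = θ_{0,S}^n` for all `n`. -/
theorem absorption_parameter_eq_theta0
    (S : ℕ → Kernel α α) (hS : IsSubMarkovSemigroup S)
    {I : Type} {W : α → ℝ} {ν : I → Measure α} {η : I → α → ℝ} {a : ℕ → ℝ}
    (hA : AssumptionA S W ν η a)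
    (νq : Measure α) (hq : IsQSD S νq)
    (hνW : (∫⁻ x, ENNReal.ofReal (W x) ∂νq) ≠ ∞)
    (hη : 0 < ∫ x, (∑' i, η i x) ∂νq)
    (hl : ∃ l : ℝ, 0 ≤ l ∧ νq {x | jfun S x ≤ l} = 1) :
    ∀ n : ℕ, kmass S n νq = theta0 S ^ n := by
  obtain ⟨l, -, hl⟩ := hl
  have := hq.1
  have hL : νq {x | jfun S x ≤ ⌈l⌉₊} = 1 :=
    le_antisymm prob_le_one (hl ▸ measure_mono fun x hx => hx.trans (Nat.le_ceil l))
  have hθ : kmass S 1 νq = theta0 S := by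
    refine (toReal_eq_toReal_iff' (ne_top_of_le_ne_top one_ne_top (hS.kmass_le_one 1 νq))
      (ne_top_of_le_ne_top one_ne_top hA.theta0_le_one)).1 (le_antisymm ?_ ?_)
    · exact hA.toReal_kmass_le_of_isQSD hS hq hνW ⌈l⌉₊ hL
    · exact hA.toReal_theta0_le_of_isQSD hS hq hνW hη
  intro n
  rw [hq.kmass_eq_pow hS, hθ]
end
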